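/- Let B be a bouquet all of whose chords are untwisted, with chord set E, and let e ∈ E. Then deleting e changes the number of boundary components by exactly one: f(B|(E∖{e})) = f(B) + 1 or f(B|(E∖{e})) = f(B) − 1. -/

import Mathlib

open Polynomial
open scoped Classical

/-- A bouquet (one-vertex ribbon graph) with `n` loops, encoded as a signed chord
diagram on the circle `ZMod (2*n)`: `σ` is a fixed-point-free involution pairing the
two endpoints of each chord, and `t` records which chords are twisted.
(For `n = 0` the data is pinned to a canonical value, since `ZMod 0 = ℤ`.) -/
structure Bouquet (n : ℕ) where
  σ : ZMod (2*n) → ZMod (2*n)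
  invol : ∀ i, σ (σ i) = i
  fpf : ∀ i, σ i ≠ i
  t : ZMod (2*n) → Bool
  t_inv : ∀ i, t (σ i) = t i
  pin_σ : n = 0 → ∀ i, σ i = -(i+1)
  pin_t : n = 0 → ∀ i, t i = false

namespace Bouquet

variable {n : ℕ}

/-- A canonical (planar, all-untwisted) bouquet with `m` chords. -/
def canonical (m : ℕ) : Bouquet m where
  σ := fun x => -(x+1)
  invol := by intro i; ring
  fpf := by
    intro i h
    have h1 : (2 : ZMod (2*m)) * i + 1 = 0 := by linear_combination - h
    have h2 := congrArg (ZMod.castHom (⟨m, rfl⟩ : (2:ℕ) ∣ 2*m) (ZMod 2)) h1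
    rw [map_add, map_mul, map_one, map_zero, map_ofNat] at h2
    have h3 : ((2 : ℕ) : ZMod 2) = 0 := by decide
    simp only [Nat.cast_ofNat] at h3
    rw [h3, zero_mul, zero_add] at h2
    exact one_ne_zero h2
  t := fun _ => false
  t_inv := fun _ => rfl
  pin_σ := fun _ _ => rfl
  pin_t := fun _ _ => rfl

/-- Transport of a bouquet structure along a bijective relabelling of a
`σ`-invariant set of endpoints. -/
def transport {m : ℕ} (hm : m ≠ 0) (B : Bouquet n) (S : Finset (ZMod (2*n)))
    (hS : ∀ i ∈ S, B.σ i ∈ S) (e : ZMod (2*m) ≃ {x : ZMod (2*n) // x ∈ S}) :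
    Bouquet m where
  σ := fun x => e.symm ⟨B.σ (e x), hS _ (e x).2⟩
  invol := by intro x; simp [B.invol]
  fpf := by
    intro x h
    apply B.fpf ((e x : {x // x ∈ S}) : ZMod (2*n))
    have h2 := congrArg (fun y => (e y : {x // x ∈ S})) h
    simp only [Equiv.apply_symm_apply] at h2
    exact congrArg Subtype.val h2
  t := fun x => B.t (e x)
  t_inv := by intro x; simp [B.t_inv]
  pin_σ := fun h0 => absurd h0 hm
  pin_t := fun h0 => absurd h0 hm

/-- The order isomorphism `ZMod M ≃ Fin M` (via `ZMod.val`), for `M ≠ 0`. -/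
def zmodFinEquiv (M : ℕ) [NeZero M] : ZMod M ≃ Fin M where
  toFun x := ⟨x.val, ZMod.val_lt x⟩
  invFun k := (k.val : ZMod M)
  left_inv x := ZMod.natCast_rightInverse x
  right_inv k := by
    ext
    simpa using ZMod.val_cast_of_lt k.isLt

/-- The induced signed chord diagram `B|S` on a `σ`-invariant set `S` of endpoints,
relabelled order-preservingly by `ZMod (2*(S.card/2))`.  (Junk value otherwise.) -/
noncomputable def restrict (B : Bouquet n) (S : Finset (ZMod (2*n))) :
    Bouquet (S.card / 2) :=
  if h : n ≠ 0 ∧ S.card / 2 ≠ 0 ∧ S.card = 2 * (S.card / 2) ∧ ∀ i ∈ S, B.σ i ∈ S then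
    haveI h1 : NeZero (2*n) := ⟨by omega⟩
    haveI h2 : NeZero (2*(S.card/2)) := ⟨by omega⟩
    let E := zmodFinEquiv (2*n)
    let S' : Finset (Fin (2*n)) := S.image E
    have hc : S'.card = 2*(S.card/2) := by
      rw [Finset.card_image_of_injective _ E.injective]; exact h.2.2.1
    transport h.2.1 B S h.2.2.2
      ((zmodFinEquiv (2*(S.card/2))).trans
        ((S'.orderIsoOfFin hc).toEquiv.trans (Equiv.subtypeEquiv E.symm (by
          intro a
          simp only [S', Finset.mem_image]
          constructor
          · rintro ⟨b, hb, rfl⟩; simpa using hb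
          · intro ha; exact ⟨E.symm a, ha, by simp⟩))))
  else canonical (S.card / 2)

/-- The boundary-tracing permutation `Φ` of a bouquet. -/
def Phi (B : Bouquet n) : ZMod (2*n) × Bool → ZMod (2*n) × Bool :=
  fun p =>
    match p with
    | (i, false) => if B.t (i+1) = true then (B.σ (i+1) - 1, true) else (B.σ (i+1), false)
    | (i, true) => if B.t i = true then (B.σ i, false) else (B.σ i - 1, true)

/-- The number of classes of the equivalence relation generated by a relation. -/
noncomputable def relClasses {α : Type*} (r : α → α → Prop) : ℕ :=
  Nat.card (Quotient (Relation.EqvGen.setoid r))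

/-- The number of orbits of (the permutation generated by) a self-map. -/
noncomputable def orbitCount {α : Type*} (f : α → α) : ℕ :=
  relClasses (fun x y => f x = y)

/-- The number of boundary components `f(B)`: half the number of orbits of `Φ`. -/
noncomputable def numBoundary (B : Bouquet n) : ℕ :=
  if n = 0 then 1 else orbitCount (Phi B) / 2

/-- The Euler genus `ε(B) = 1 + n - f(B)`. -/
noncomputable def eulerGenus (B : Bouquet n) : ℕ := 1 + n - numBoundary B

/-- `i` and `j` represent the same chord of `B`. -/
def SameChord (B : Bouquet n) (i j : ZMod (2*n)) : Prop := j = i ∨ j = B.σ i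

/-- The chords through `i` and through `j` interlace: exactly one endpoint of the
chord through `j` lies strictly between the two endpoints of the chord through `i`
(so the four endpoints alternate in the cyclic order). -/
def Interlace (B : Bouquet n) (i j : ZMod (2*n)) : Prop :=
  Xor' (min i.val (B.σ i).val < j.val ∧ j.val < max i.val (B.σ i).val)
       (min i.val (B.σ i).val < (B.σ j).val ∧ (B.σ j).val < max i.val (B.σ i).val)

/-- The partial-dual Euler genus polynomial
`∂ε_B(z) = Σ_{A ⊆ chords(B)} z^(ε(B|A) + ε(B|Aᶜ))`, the sum running over all
(σ-invariant endpoint sets of) sets of chords of `B`. -/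
noncomputable def pdPoly (B : Bouquet n) : Polynomial ℤ :=
  if h : n = 0 then 1 else
    haveI : NeZero (2*n) := ⟨by omega⟩
    ∑ S ∈ Finset.univ.filter (fun S : Finset (ZMod (2*n)) => ∀ i ∈ S, B.σ i ∈ S),
      (Polynomial.X : Polynomial ℤ) ^
        (eulerGenus (B.restrict S) + eulerGenus (B.restrict Sᶜ))


section Machinery
open Relation
variable {α β : Type*}

lemma eqvGen_mono' {r s : α → α → Prop} (h : ∀ a b, r a b → EqvGen s a b)
    {a b : α} (hab : EqvGen r a b) : EqvGen s a b := by
  induction hab with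
  | rel u v h' => exact h u v h'
  | refl u => exact EqvGen.refl u
  | symm u v _ ih => exact EqvGen.symm _ _ ih
  | trans u v w _ _ ih1 ih2 => exact EqvGen.trans _ _ _ ih1 ih2

lemma relClasses_congr {r s : α → α → Prop}
    (h : ∀ a b, EqvGen r a b ↔ EqvGen s a b) : relClasses r = relClasses s := by
  have : EqvGen.setoid r = EqvGen.setoid s := Setoid.ext h
  unfold relClasses
  rw [this]

lemma exists_iterate_fixed [Finite α] {f : α → α} (hf : Function.Injective f) (x : α) :
    ∃ N, 1 ≤ N ∧ f^[N] x = x := by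
  obtain ⟨i, j, hne, hij⟩ := Finite.exists_ne_map_eq_of_infinite (fun k : ℕ => f^[k] x)
  rcases Nat.lt_or_ge i j with h | h
  · refine ⟨j - i, by omega, ?_⟩
    have : f^[i] (f^[j-i] x) = f^[i] x := by
      rw [← Function.iterate_add_apply]
      rw [show i + (j - i) = j by omega]
      exact hij.symm
    exact hf.iterate i this
  · have hij' : i ≠ j := hne
    have h' : j < i := by omega
    refine ⟨i - j, by omega, ?_⟩
    have : f^[j] (f^[i-j] x) = f^[j] x := by
      rw [← Function.iterate_add_apply]
      rw [show j + (i - j) = i by omega]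
      exact hij
    exact hf.iterate j this

lemma iterate_mul_fixed {f : α → α} {x : α} {N : ℕ} (h : f^[N] x = x) :
    ∀ m, f^[N * m] x = x := by
  intro m
  induction m with
  | zero => simp
  | succ k ih =>
    rw [Nat.mul_succ, Function.iterate_add_apply, h, ih]

lemma eqvGen_graph_iff [Finite α] {f : α → α} (hf : Function.Injective f) {x y : α} :
    EqvGen (fun u v => f u = v) x y ↔ ∃ k, f^[k] x = y := by
  constructor
  · intro h
    induction h with
    | rel u v h' => exact ⟨1, h'⟩
    | refl u => exact ⟨0, rfl⟩
    | symm u v _ ih =>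
      obtain ⟨k, hk⟩ := ih
      obtain ⟨N, hN1, hNx⟩ := exists_iterate_fixed hf u
      refine ⟨N * (k+1) - k, ?_⟩
      have h1 : f^[N * (k+1) - k] (f^[k] u) = u := by
        rw [← Function.iterate_add_apply]
        have hle : k + 1 ≤ N * (k+1) := Nat.le_mul_of_pos_left _ (by omega)
        rw [show N * (k+1) - k + k = N * (k+1) by omega]
        exact iterate_mul_fixed hNx (k+1)
      rw [← hk]; exact h1
    | trans u v w _ _ ih1 ih2 =>
      obtain ⟨k1, hk1⟩ := ih1
      obtain ⟨k2, hk2⟩ := ih2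
      exact ⟨k2 + k1, by rw [Function.iterate_add_apply, hk1, hk2]⟩
  · rintro ⟨k, hk⟩
    subst hk
    induction k with
    | zero => exact EqvGen.refl x
    | succ i ih =>
      rw [Function.iterate_succ_apply']
      exact EqvGen.trans _ _ _ ih (EqvGen.rel _ _ rfl)

lemma iterate_eqvGen (f : α → α) (x : α) (k : ℕ) :
    EqvGen (fun u v => f u = v) x (f^[k] x) := by
  induction k with
  | zero => exact EqvGen.refl x
  | succ i ih =>
    rw [Function.iterate_succ_apply']
    exact EqvGen.trans _ _ _ ih (EqvGen.rel _ _ rfl)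

lemma eqvGen_map (e : α → β) {r : α → α → Prop} {s : β → β → Prop}
    (h : ∀ u v, r u v → EqvGen s (e u) (e v)) {a b : α} (hab : EqvGen r a b) :
    EqvGen s (e a) (e b) := by
  induction hab with
  | rel u v h' => exact h u v h'
  | refl u => exact EqvGen.refl _
  | symm u v _ ih => exact EqvGen.symm _ _ ih
  | trans u v w _ _ ih1 ih2 => exact EqvGen.trans _ _ _ ih1 ih2

lemma orbitCount_conj (e : α ≃ β) (f : α → α) :
    orbitCount (fun b => e (f (e.symm b))) = orbitCount f := by
  unfold orbitCount relClasses
  refine (Nat.card_congr (Quotient.congr e ?_)).symm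
  intro a b
  constructor
  · exact eqvGen_map e (fun u v h' => EqvGen.rel _ _ (by simp [← h']))
  · intro h
    have h2 := eqvGen_map (e.symm) (r := fun u v => e (f (e.symm u)) = v)
      (s := fun u v => f u = v)
      (fun u v h' => EqvGen.rel _ _ (by rw [← h']; simp)) h
    have h3 : EqvGen (fun u v => f u = v) a b := by simpa using h2
    exact h3

lemma orbitCount_inv {f g : α → α} (h : ∀ u v, f u = v ↔ g v = u) :
    orbitCount f = orbitCount g := by
  unfold orbitCount
  apply relClasses_congr
  intro a b
  constructor
  · exact eqvGen_mono' (fun u v h' => EqvGen.symm _ _ (EqvGen.rel _ _ ((h u v).mp h')))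
  · exact eqvGen_mono' (fun u v h' => EqvGen.symm _ _ (EqvGen.rel _ _ ((h v u).mpr h')))

end Machinery

section Machinery
open Relation
variable {α β : Type*}

lemma orbitCount_sumMap [Finite α] [Finite β] (f : α → α) (g : β → β) :
    orbitCount (Sum.map f g) = orbitCount f + orbitCount g := by
  unfold orbitCount relClasses
  haveI : Finite (Quotient (EqvGen.setoid (fun x y => f x = y))) := Quotient.finite _
  haveI : Finite (Quotient (EqvGen.setoid (fun x y => g x = y))) := Quotient.finite _
  rw [← Nat.card_sum]
  apply Nat.card_congr
  have resp1 : ∀ (u v : α ⊕ β), EqvGen (fun s t => Sum.map f g s = t) u v →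
      (Sum.elim (fun x => (Sum.inl (Quotient.mk _ x) : Quotient (EqvGen.setoid (fun x y => f x = y)) ⊕ Quotient (EqvGen.setoid (fun x y => g x = y))))
        (fun y => Sum.inr (Quotient.mk _ y))) u =
      (Sum.elim (fun x => Sum.inl (Quotient.mk _ x)) (fun y => Sum.inr (Quotient.mk _ y))) v := by
    intro u v h
    induction h with
    | rel u v h' =>
      subst h'
      rcases u with x | y
      · exact congrArg Sum.inl (Quot.sound (EqvGen.rel _ _ rfl))
      · exact congrArg Sum.inr (Quot.sound (EqvGen.rel _ _ rfl))
    | refl u => rfl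
    | symm u v _ ih => exact ih.symm
    | trans u v w _ _ ih1 ih2 => exact ih1.trans ih2
  refine ⟨Quotient.lift _ resp1, ?_, ?_, ?_⟩
  · refine Sum.elim (Quotient.lift (fun x => Quotient.mk _ (Sum.inl x)) ?_)
      (Quotient.lift (fun y => Quotient.mk _ (Sum.inr y)) ?_)
    · intro u v h
      exact Quot.sound (eqvGen_map Sum.inl
        (fun u v h' => EqvGen.rel _ _ (show Sum.map f g (Sum.inl u) = Sum.inl v by simp [h'])) h)
    · intro u v h
      exact Quot.sound (eqvGen_map Sum.inr
        (fun u v h' => EqvGen.rel _ _ (show Sum.map f g (Sum.inr u) = Sum.inr v by simp [h'])) h)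
  · intro q
    induction q using Quotient.ind with
    | _ s => rcases s with x | y <;> rfl
  · intro s
    rcases s with q | q
    · induction q using Quotient.ind with
      | _ x => rfl
    · induction q using Quotient.ind with
      | _ y => rfl

lemma exact_eqvGen {r : α → α → Prop} {u v : α}
    (h : Quotient.mk (EqvGen.setoid r) u = Quotient.mk (EqvGen.setoid r) v) :
    EqvGen r u v := by
  have h2 := Quot.eqvGen_exact h
  exact eqvGen_mono' (fun a b hh => hh) h2

lemma relClasses_pair_of_eqvGen {r : α → α → Prop} {a b : α} (hab : EqvGen r a b) :
    relClasses (fun u v => r u v ∨ (u = a ∧ v = b)) = relClasses r := by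
  apply relClasses_congr
  intro u v
  constructor
  · refine fun h => eqvGen_mono' ?_ h
    rintro u v (h' | ⟨rfl, rfl⟩)
    · exact EqvGen.rel _ _ h'
    · exact hab
  · exact fun h => eqvGen_mono' (fun u v h' => EqvGen.rel _ _ (Or.inl h')) h

lemma relClasses_pair_succ [Finite α] {r : α → α → Prop} {a b : α}
    (hab : ¬ EqvGen r a b) :
    relClasses (fun u v => r u v ∨ (u = a ∧ v = b)) + 1 = relClasses r := by
  classical
  set r' := fun u v => r u v ∨ (u = a ∧ v = b) with hr'
  set s := EqvGen.setoid r with hs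
  set s' := EqvGen.setoid r' with hs'
  set φ₀ : α → Quotient s := fun u => if EqvGen r u b then Quotient.mk s a else Quotient.mk s u
    with hφ₀
  have resp : ∀ u v, EqvGen r' u v → φ₀ u = φ₀ v := by
    intro u v h
    induction h with
    | rel u v h' =>
      rcases h' with h' | ⟨rfl, rfl⟩
      · by_cases hub : EqvGen r u b
        · have hvb : EqvGen r v b :=
            EqvGen.trans _ _ _ (EqvGen.symm _ _ (EqvGen.rel _ _ h')) hub
          simp only [hφ₀, if_pos hub, if_pos hvb]
        · have hvb : ¬ EqvGen r v b := fun hv => hub (EqvGen.trans _ _ _ (EqvGen.rel _ _ h') hv)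
          simp only [hφ₀, if_neg hub, if_neg hvb]
          exact Quot.sound (EqvGen.rel _ _ h')
      · simp only [hφ₀]
        split_ifs <;> first | rfl | exact absurd (EqvGen.refl _) (by assumption)
    | refl u => rfl
    | symm u v _ ih => exact ih.symm
    | trans u v w _ _ ih1 ih2 => exact ih1.trans ih2
  have sound_s : ∀ {u v : α}, EqvGen r u v → Quotient.mk s u = Quotient.mk s v :=
    fun h => Quot.sound h
  have sound_s' : ∀ {u v : α}, EqvGen r' u v → Quotient.mk s' u = Quotient.mk s' v :=
    fun h => Quot.sound h
  have lift_r : ∀ {u v : α}, EqvGen r u v → EqvGen r' u v :=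
    fun h => eqvGen_mono' (fun a b h' => EqvGen.rel _ _ (Or.inl h')) h
  have hpair : EqvGen r' a b := EqvGen.rel _ _ (Or.inr ⟨rfl, rfl⟩)
  have hne : ∀ u : α, φ₀ u ≠ Quotient.mk s b := by
    intro u heq
    simp only [hφ₀] at heq
    split_ifs at heq with hub
    · exact hab (exact_eqvGen heq)
    · exact hub (exact_eqvGen heq)
  have key : Quotient s' ≃ {z : Quotient s // z ≠ Quotient.mk s b} := by
    refine Equiv.ofBijective (fun q => ⟨Quotient.lift φ₀ resp q, ?_⟩) ⟨?_, ?_⟩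
    · induction q using Quotient.ind with
      | _ u => exact hne u
    · intro q1 q2 h
      induction q1 using Quotient.ind with
      | _ u =>
      induction q2 using Quotient.ind with
      | _ v =>
      have h2 : φ₀ u = φ₀ v := congrArg Subtype.val h
      simp only [hφ₀] at h2
      split_ifs at h2 with hub hvb hvb
      · exact sound_s' (EqvGen.trans _ _ _ (lift_r hub)
          (EqvGen.symm _ _ (lift_r hvb)))
      · -- mk a = mk v, u ~ b
        have hav : EqvGen r a v := exact_eqvGen h2
        exact sound_s' (EqvGen.trans _ _ _ (lift_r hub) (EqvGen.trans _ _ _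
          (EqvGen.symm _ _ hpair) (lift_r hav)))
      · have hua : EqvGen r u a := exact_eqvGen h2
        exact sound_s' (EqvGen.trans _ _ _ (lift_r hua) (EqvGen.trans _ _ _
          hpair (EqvGen.symm _ _ (lift_r hvb))))
      · exact sound_s' (lift_r (exact_eqvGen h2))
    · rintro ⟨z, hz⟩
      obtain ⟨u, rfl⟩ := Quot.exists_rep z
      by_cases hub : EqvGen r u b
      · exact absurd (sound_s hub) hz
      · refine ⟨Quotient.mk s' u, Subtype.ext ?_⟩
        show φ₀ u = _
        simp only [hφ₀, if_neg hub]
        rfl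
  have hcardeq : relClasses r' = Nat.card {z : Quotient s // z ≠ Quotient.mk s b} :=
    Nat.card_congr key
  haveI : Finite (Quotient s) := Quotient.finite _
  haveI : Fintype (Quotient s) := Fintype.ofFinite _
  have h1 : Nat.card {z : Quotient s // z ≠ Quotient.mk s b}
      = Fintype.card (Quotient s) - 1 := by
    rw [Nat.card_eq_fintype_card]
    have := Fintype.card_subtype_compl (fun z : Quotient s => z = Quotient.mk s b)
    rw [Fintype.card_subtype_eq] at this
    exact this
  have h2 : 1 ≤ Fintype.card (Quotient s) :=
    Fintype.card_pos_iff.mpr ⟨Quotient.mk s b⟩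
  have h3 : relClasses r = Fintype.card (Quotient s) := Nat.card_eq_fintype_card
  unfold relClasses at hcardeq ⊢
  rw [show (EqvGen.setoid fun u v => r u v ∨ u = a ∧ v = b) = s' from rfl] at *
  rw [hcardeq, h1]
  rw [show Nat.card (Quotient (EqvGen.setoid r)) = Fintype.card (Quotient s) from h3]
  omega

end Machinery

section Machinery
open Relation
variable {α β : Type*}

lemma eqvGen_symm_iff {r : α → α → Prop} {a b : α} : EqvGen r a b ↔ EqvGen r b a :=
  ⟨EqvGen.symm a b, EqvGen.symm b a⟩

lemma key_swap_post [Finite α] [DecidableEq α] {p : α → α} (hp : Function.Injective p)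
    {a b : α} (hab : a ≠ b) :
    (EqvGen (fun u v => Equiv.swap a b (p u) = v) a b ↔ ¬ EqvGen (fun u v => p u = v) a b) := by
  classical
  set q : α → α := fun u => Equiv.swap a b (p u) with hqdef
  have hq : Function.Injective q := fun u v h => hp ((Equiv.swap a b).injective h)
  obtain ⟨N, hN1, hNb⟩ := exists_iterate_fixed hp b
  have hex : ∃ k, 1 ≤ k ∧ (p^[k] b = a ∨ p^[k] b = b) := ⟨N, hN1, Or.inr hNb⟩
  set m := Nat.find hex with hmdef
  obtain ⟨hm1, hm2⟩ := Nat.find_spec hex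
  have hmin : ∀ j, 1 ≤ j → j < m → p^[j] b ≠ a ∧ p^[j] b ≠ b := by
    intro j h1 h2
    have := Nat.find_min hex h2
    push_neg at this
    exact this h1
  have hqp : ∀ j, j < m → q^[j] b = p^[j] b := by
    intro j hj
    induction j with
    | zero => rfl
    | succ i ih =>
      have hi : i < m := Nat.lt_of_succ_lt hj
      rw [Function.iterate_succ_apply', Function.iterate_succ_apply', ih hi]
      show Equiv.swap a b (p (p^[i] b)) = p (p^[i] b)
      have hstep : p (p^[i] b) = p^[i+1] b := (Function.iterate_succ_apply' p i b).symm
      rw [hstep]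
      exact Equiv.swap_apply_of_ne_of_ne (hmin (i+1) (by omega) hj).1 (hmin (i+1) (by omega) hj).2
  have hm0 : m ≠ 0 := by omega
  have hqm : q^[m] b = Equiv.swap a b (p^[m] b) := by
    obtain ⟨m', hm'⟩ : ∃ m', m = m' + 1 := ⟨m - 1, by omega⟩
    rw [hm', Function.iterate_succ_apply', Function.iterate_succ_apply', hqp m' (by omega)]
  -- characterization of iterates mod m
  have periodic : ∀ (f : α → α), f^[m] b = b → ∀ k, f^[k] b = f^[k % m] b := by
    intro f hf k
    conv_lhs => rw [← Nat.mod_add_div k m]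
    rw [Function.iterate_add_apply, iterate_mul_fixed hf]
  rcases hm2 with hma | hmb
  · have hqmb : q^[m] b = b := by rw [hqm, hma, Equiv.swap_apply_left]
    have hpab : EqvGen (fun u v => p u = v) a b :=
      EqvGen.symm _ _ ((eqvGen_graph_iff hp).mpr ⟨m, hma⟩)
    have hnq : ¬ EqvGen (fun u v => q u = v) a b := by
      intro hE
      obtain ⟨k, hk⟩ := (eqvGen_graph_iff hq).mp (EqvGen.symm _ _ hE)
      rw [periodic q hqmb k] at hk
      rcases Nat.eq_zero_or_pos (k % m) with h0 | h1
      · rw [h0] at hk; exact hab hk.symm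
      · have hlt : k % m < m := Nat.mod_lt _ (by omega)
        rw [hqp _ hlt] at hk
        exact (hmin _ h1 hlt).1 hk
    exact iff_of_false hnq (not_not_intro hpab)
  · have hqma : q^[m] b = a := by rw [hqm, hmb, Equiv.swap_apply_right]
    have hqab : EqvGen (fun u v => q u = v) a b :=
      EqvGen.symm _ _ ((eqvGen_graph_iff hq).mpr ⟨m, hqma⟩)
    have hnp : ¬ EqvGen (fun u v => p u = v) a b := by
      intro hE
      obtain ⟨k, hk⟩ := (eqvGen_graph_iff hp).mp (EqvGen.symm _ _ hE)
      rw [periodic p hmb k] at hk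
      rcases Nat.eq_zero_or_pos (k % m) with h0 | h1
      · rw [h0] at hk; exact hab hk.symm
      · have hlt : k % m < m := Nat.mod_lt _ (by omega)
        exact (hmin _ h1 hlt).1 hk
    exact iff_of_true hqab hnp

end Machinery

section Machinery
open Relation
variable {α β : Type*}

lemma orbitCount_comp_swap [Finite α] [DecidableEq α] {p : α → α}
    (hp : Function.Injective p) {a b : α} (hab : a ≠ b) :
    orbitCount (fun x => p (Equiv.swap a b x)) = orbitCount p + 1 ∨
    orbitCount (fun x => p (Equiv.swap a b x)) + 1 = orbitCount p := by
  classical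
  set q : α → α := fun x => p (Equiv.swap a b x) with hqdef
  -- join equality
  have hjoin : relClasses (fun u v => q u = v ∨ (u = a ∧ v = b)) =
      relClasses (fun u v => p u = v ∨ (u = a ∧ v = b)) := by
    apply relClasses_congr
    have hpair1 : EqvGen (fun u v => p u = v ∨ (u = a ∧ v = b)) a b :=
      EqvGen.rel _ _ (Or.inr ⟨rfl, rfl⟩)
    have hpair2 : EqvGen (fun u v => q u = v ∨ (u = a ∧ v = b)) a b :=
      EqvGen.rel _ _ (Or.inr ⟨rfl, rfl⟩)
    intro u v
    constructor
    · refine fun h => eqvGen_mono' ?_ h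
      rintro u v (h' | ⟨rfl, rfl⟩)
      · by_cases hua : u = a
        · subst hua
          have : q u = p b := by simp [hqdef, Equiv.swap_apply_left]
          rw [← h', this]
          exact EqvGen.trans _ _ _ hpair1 (EqvGen.rel _ _ (Or.inl rfl))
        · by_cases hub : u = b
          · subst hub
            have : q u = p a := by simp [hqdef, Equiv.swap_apply_right]
            rw [← h', this]
            exact EqvGen.trans _ _ _ (EqvGen.symm _ _ hpair1) (EqvGen.rel _ _ (Or.inl rfl))
          · have : q u = p u := by simp [hqdef, Equiv.swap_apply_of_ne_of_ne hua hub]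
            rw [← h', this]
            exact EqvGen.rel _ _ (Or.inl rfl)
      · exact hpair1
    · refine fun h => eqvGen_mono' ?_ h
      rintro u v (h' | ⟨rfl, rfl⟩)
      · by_cases hua : u = a
        · subst hua
          have : p u = q b := by simp [hqdef, Equiv.swap_apply_right]
          rw [← h', this]
          exact EqvGen.trans _ _ _ hpair2 (EqvGen.rel _ _ (Or.inl rfl))
        · by_cases hub : u = b
          · subst hub
            have : p u = q a := by simp [hqdef, Equiv.swap_apply_left]
            rw [← h', this]
            exact EqvGen.trans _ _ _ (EqvGen.symm _ _ hpair2) (EqvGen.rel _ _ (Or.inl rfl))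
          · have : p u = q u := by simp [hqdef, Equiv.swap_apply_of_ne_of_ne hua hub]
            rw [← h', this]
            exact EqvGen.rel _ _ (Or.inl rfl)
      · exact hpair2
  -- key fact
  have hkey : EqvGen (fun u v => q u = v) a b ↔ ¬ EqvGen (fun u v => p u = v) a b := by
    rw [← key_swap_post hp hab]
    constructor
    · intro h
      have h2 := eqvGen_map (Equiv.swap a b)
        (r := fun u v => q u = v) (s := fun u v => Equiv.swap a b (p u) = v)
        (fun u v h' => EqvGen.rel _ _ (by rw [← h'])) h
      rw [Equiv.swap_apply_left, Equiv.swap_apply_right] at h2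
      exact EqvGen.symm _ _ h2
    · intro h
      have h2 := eqvGen_map (Equiv.swap a b)
        (r := fun u v => Equiv.swap a b (p u) = v) (s := fun u v => q u = v)
        (fun u v h' => EqvGen.rel _ _ (by
          rw [← h']
          show p (Equiv.swap a b (Equiv.swap a b u)) = Equiv.swap a b (Equiv.swap a b (p u))
          rw [Equiv.swap_apply_self, Equiv.swap_apply_self])) h
      rw [Equiv.swap_apply_left, Equiv.swap_apply_right] at h2
      exact EqvGen.symm _ _ h2
  by_cases hE : EqvGen (fun u v => p u = v) a b
  · left
    have h1 := relClasses_pair_of_eqvGen hE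
    have hnq : ¬ EqvGen (fun u v => q u = v) a b := fun h => (hkey.mp h) hE
    have h2 := relClasses_pair_succ hnq
    show relClasses _ = relClasses _ + 1
    omega
  · right
    have hq' : EqvGen (fun u v => q u = v) a b := hkey.mpr hE
    have h1 := relClasses_pair_of_eqvGen hq'
    have h2 := relClasses_pair_succ hE
    show relClasses _ + 1 = relClasses _
    omega

lemma orbitCount_return [Finite α] {f : α → α} (hf : Function.Injective f)
    {P : α → Prop} (r : {x // P x} → {x // P x})
    (hr : ∀ u : {x // P x}, ∃ k, 1 ≤ k ∧ f^[k] u.1 = (r u).1 ∧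
      ∀ j, 1 ≤ j → j < k → ¬ P (f^[j] u.1))
    (hmeet : ∀ x : α, ∃ k, P (f^[k] x)) :
    orbitCount r = orbitCount f := by
  unfold orbitCount relClasses
  apply Nat.card_congr
  refine Equiv.ofBijective (Quotient.lift (fun u : {x // P x} =>
    Quotient.mk (EqvGen.setoid (fun x y => f x = y)) u.1) ?_) ⟨?_, ?_⟩
  · intro u v h
    refine Quot.sound (eqvGen_map (fun z : {x // P x} => z.1) ?_ h)
    intro u v h'
    obtain ⟨k, -, hk, -⟩ := hr u
    show EqvGen (fun x y => f x = y) u.1 v.1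
    rw [← h', ← hk]
    exact iterate_eqvGen f u.1 k
  · have claim : ∀ k (u : {x // P x}), P (f^[k] u.1) → ∃ j, (r^[j] u).1 = f^[k] u.1 := by
      intro k
      induction k using Nat.strong_induction_on with
      | _ k ih =>
        intro u hPk
        rcases Nat.eq_zero_or_pos k with rfl | hk1
        · exact ⟨0, rfl⟩
        · obtain ⟨k₁, hk₁1, hk₁eq, hk₁min⟩ := hr u
          have hk₁le : k₁ ≤ k := by
            by_contra hgt
            exact (hk₁min k hk1 (by omega)) hPk
          have hrest : f^[k - k₁] (r u).1 = f^[k] u.1 := by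
            rw [← hk₁eq, ← Function.iterate_add_apply]
            congr 1
            omega
          have hP' : P (f^[k - k₁] (r u).1) := by rw [hrest]; exact hPk
          obtain ⟨j, hj⟩ := ih (k - k₁) (by omega) (r u) hP'
          refine ⟨j + 1, ?_⟩
          rw [Function.iterate_succ_apply]
          rw [hj, hrest]
    intro q1 q2 h
    induction q1 using Quotient.ind with
    | _ u =>
    induction q2 using Quotient.ind with
    | _ v =>
    have h2 : EqvGen (fun x y => f x = y) u.1 v.1 := exact_eqvGen h
    obtain ⟨k, hk⟩ := (eqvGen_graph_iff hf).mp h2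
    have hPk : P (f^[k] u.1) := by rw [hk]; exact v.2
    obtain ⟨j, hj⟩ := claim k u hPk
    have huv : r^[j] u = v := Subtype.ext (by rw [hj, hk])
    refine Quot.sound ?_
    rw [← huv]
    exact iterate_eqvGen r u j
  · intro z
    induction z using Quotient.ind with
    | _ x =>
    obtain ⟨k, hPk⟩ := hmeet x
    refine ⟨Quotient.mk _ (⟨f^[k] x, hPk⟩ : {x // P x}), ?_⟩
    exact Quot.sound (EqvGen.symm _ _ (iterate_eqvGen f x k))

end Machinery



section Machinery2
open Relation
variable {α β : Type*}

lemma orbitCount_id : orbitCount (fun a : α => a) = Nat.card α := by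
  unfold orbitCount relClasses
  apply Nat.card_congr
  refine Equiv.ofBijective (Quotient.lift (fun u : α => u) ?_) ⟨?_, ?_⟩
  · intro u v h
    induction h with
    | rel u v h' => exact h'
    | refl u => rfl
    | symm u v _ ih => exact ih.symm
    | trans u v w _ _ ih1 ih2 => exact ih1.trans ih2
  · intro q1 q2 h
    induction q1 using Quotient.ind with
    | _ u =>
    induction q2 using Quotient.ind with
    | _ v =>
    exact Quot.sound (EqvGen.rel _ _ (h : u = v))
  · intro u
    exact ⟨Quotient.mk _ u, rfl⟩

lemma orbitCount_funext {f g : α → α} (h : ∀ u, f u = g u) : orbitCount f = orbitCount g := by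
  have : f = g := funext h
  rw [this]

end Machinery2

def dfun (a b : ℕ) : ℕ → ℕ := fun t => if t < a then t else if t + 1 < b then t + 1 else t + 2

lemma dfun_cases (a b t : ℕ) : (t < a ∧ dfun a b t = t) ∨ (a ≤ t ∧ t+1 < b ∧ dfun a b t = t+1) ∨
    (a ≤ t ∧ b ≤ t+1 ∧ dfun a b t = t+2) := by
  unfold dfun; split_ifs <;> omega

lemma natord {N M a b k : ℕ} (hN : N = M + 2) (hM : 2 ≤ M) (hab : a < b) (hbN : b < N)
    (hk : k < M) :
    (dfun a b ((k+1) % M) % N = (dfun a b k + 1) % N ∧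
      ((dfun a b k + 1) % N ≠ a ∧ (dfun a b k + 1) % N ≠ b)) ∨
    (dfun a b ((k+1) % M) % N = (dfun a b k + 2) % N ∧
      ¬((dfun a b k + 1) % N ≠ a ∧ (dfun a b k + 1) % N ≠ b) ∧
      ((dfun a b k + 2) % N ≠ a ∧ (dfun a b k + 2) % N ≠ b)) ∨
    (dfun a b ((k+1) % M) % N = (dfun a b k + 3) % N ∧
      ¬((dfun a b k + 1) % N ≠ a ∧ (dfun a b k + 1) % N ≠ b) ∧
      ¬((dfun a b k + 2) % N ≠ a ∧ (dfun a b k + 2) % N ≠ b) ∧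
      ((dfun a b k + 3) % N ≠ a ∧ (dfun a b k + 3) % N ≠ b)) := by
  have hmod : ∀ t : ℕ, t < 2*N → t % N = if t < N then t else t - N := by
    intro t ht
    split_ifs with h
    · exact Nat.mod_eq_of_lt h
    · rw [Nat.mod_eq_sub_mod (le_of_not_gt h)]
      exact Nat.mod_eq_of_lt (by omega)
  rcases Nat.lt_or_ge (k+1) M with hc | hc
  · rw [Nat.mod_eq_of_lt hc]
    rcases dfun_cases a b k with ⟨h1, h2⟩ | ⟨h1, h1', h2⟩ | ⟨h1, h1', h2⟩ <;>
      rcases dfun_cases a b (k+1) with ⟨g1, g2⟩ | ⟨g1, g1', g2⟩ | ⟨g1, g1', g2⟩ <;>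
        rw [h2, g2] <;>
          (repeat rw [hmod _ (by omega)]) <;>
            split_ifs <;> omega
  · have hceq : k + 1 = M := by omega
    rw [hceq, Nat.mod_self]
    rcases dfun_cases a b k with ⟨h1, h2⟩ | ⟨h1, h1', h2⟩ | ⟨h1, h1', h2⟩ <;>
      rcases dfun_cases a b 0 with ⟨g1, g2⟩ | ⟨g1, g1', g2⟩ | ⟨g1, g1', g2⟩ <;>
        rw [h2, g2] <;>
          (repeat rw [hmod _ (by omega)]) <;>
            split_ifs <;> omega

lemma numBoundary_eq_orbitCount {m : ℕ} (hm : m ≠ 0) (B : Bouquet m)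
    (ht : ∀ i, B.t i = false) :
    numBoundary B = orbitCount (fun i => B.σ (i+1)) := by
  haveI : NeZero (2*m) := ⟨by omega⟩
  rw [numBoundary, if_neg hm]
  set g : ZMod (2*m) → ZMod (2*m) := fun i => B.σ (i+1) with hg
  set h : ZMod (2*m) → ZMod (2*m) := fun i => B.σ i - 1 with hh
  let e2 : (ZMod (2*m) × Bool) ≃ (ZMod (2*m) ⊕ ZMod (2*m)) :=
    { toFun := fun p => match p with
        | (i, false) => Sum.inl i
        | (i, true) => Sum.inr i
      invFun := fun s => match s with
        | Sum.inl i => (i, false)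
        | Sum.inr i => (i, true)
      left_inv := by rintro ⟨i, (_|_)⟩ <;> rfl
      right_inv := by rintro (i | i) <;> rfl }
  have hconj : (fun s => e2 (Phi B (e2.symm s))) = Sum.map g h := by
    funext s
    rcases s with i | i
    · show e2 (Phi B (i, false)) = Sum.inl (g i)
      simp only [Phi, ht, Bool.false_eq_true, if_false, if_neg]
      rfl
    · show e2 (Phi B (i, true)) = Sum.inr (h i)
      simp only [Phi, ht, Bool.false_eq_true, if_false, if_neg]
      rfl
  have h1 : orbitCount (Phi B) = orbitCount (Sum.map g h) := by
    rw [← hconj]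
    exact (orbitCount_conj e2 (Phi B)).symm
  have h2 : orbitCount h = orbitCount g := by
    apply orbitCount_inv
    intro u v
    constructor
    · intro huv
      show B.σ (v + 1) = u
      rw [← huv]
      show B.σ (B.σ u - 1 + 1) = u
      rw [sub_add_cancel, B.invol]
    · intro huv
      show B.σ u - 1 = v
      rw [← huv]
      show B.σ (B.σ (v+1)) - 1 = v
      rw [B.invol, add_sub_cancel_right]
  rw [h1, orbitCount_sumMap, h2]
  omega


/-- Deleting one chord of an orientable bouquet changes the number of boundary
components by exactly one. -/
theorem numBoundary_delete_chord {n : ℕ} [NeZero n] (B : Bouquet n)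
    (hor : ∀ i, B.t i = false) (x : ZMod (2*n)) :
    numBoundary (B.restrict (Finset.univ \ {x, B.σ x})) = numBoundary B + 1 ∨
    numBoundary (B.restrict (Finset.univ \ {x, B.σ x})) + 1 = numBoundary B := by
  classical
  have hn : n ≠ 0 := NeZero.ne n
  haveI : NeZero (2*n) := ⟨by omega⟩
  have hσinj : Function.Injective B.σ := Function.LeftInverse.injective B.invol
  have hxy : x ≠ B.σ x := fun h => B.fpf x h.symm
  have hcardS : (Finset.univ \ {x, B.σ x} : Finset (ZMod (2*n))).card = 2*n - 2 := by
    rw [Finset.card_sdiff_of_subset (Finset.subset_univ _)]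
    rw [Finset.card_insert_of_notMem (by simp [hxy]), Finset.card_singleton]
    simp [Finset.card_univ, ZMod.card]
  set S : Finset (ZMod (2*n)) := Finset.univ \ {x, B.σ x} with hSdef
  have hmemS : ∀ w : ZMod (2*n), w ∈ S ↔ (w ≠ x ∧ w ≠ B.σ x) := by
    intro w
    simp [hSdef]
  rcases Nat.lt_or_ge n 2 with hn1 | hn2
  · -- n = 1
    have hne1 : n = 1 := by omega
    subst hne1
    have h0 : S.card / 2 = 0 := by omega
    have hres1 : numBoundary (B.restrict S) = 1 := by
      rw [numBoundary, if_pos h0]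
    right
    rw [hres1]
    -- numBoundary B = 2
    have hval : ∀ j : ZMod (2*1), j = 0 ∨ j = 1 := by decide
    have hσ : ∀ j : ZMod (2*1), B.σ j = j + 1 := by
      intro j
      have h01 : B.σ 0 = 1 := by
        rcases hval (B.σ 0) with h | h
        · exact absurd h (B.fpf 0)
        · exact h
      rcases hval j with rfl | rfl
      · rw [h01]; decide
      · have := B.invol 0
        rw [h01] at this
        rw [this]; decide
    have hphi : Phi B = fun p => p := by
      funext p
      rcases p with ⟨i, (_|_)⟩
      · show Phi B (i, false) = (i, false)
        simp only [Phi, hor, Bool.false_eq_true, if_false, if_neg]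
        rw [hσ]
        have : i + 1 + 1 = i := by
          rcases hval i with rfl | rfl <;> decide
        rw [this]
      · show Phi B (i, true) = (i, true)
        simp only [Phi, hor, Bool.false_eq_true, if_false, if_neg]
        rw [hσ]
        have : i + 1 - 1 = i := by ring
        rw [this]
    rw [numBoundary, if_neg (by omega : ¬ (1 = 0)), hphi, orbitCount_id]
    rw [Nat.card_eq_fintype_card]
    rw [Fintype.card_prod, ZMod.card, Fintype.card_bool]
  · -- main case : n ≥ 2
    have hki : S.card / 2 ≠ 0 := by omega
    have hkk : S.card = 2 * (S.card / 2) := by omega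
    have hinv : ∀ i ∈ S, B.σ i ∈ S := by
      intro i hi
      rw [hmemS] at hi ⊢
      obtain ⟨h1, h2⟩ := hi
      constructor
      · intro h
        apply h2
        have := congrArg B.σ h
        rw [B.invol] at this
        rw [this]
      · intro h
        exact h1 (hσinj h)
    have hcond : n ≠ 0 ∧ S.card / 2 ≠ 0 ∧ S.card = 2 * (S.card / 2) ∧ ∀ i ∈ S, B.σ i ∈ S :=
      ⟨hn, hki, hkk, hinv⟩
    haveI hNZ2 : NeZero (2*(S.card/2)) := ⟨by omega⟩
    set E := zmodFinEquiv (2*n) with hE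
    set S' : Finset (Fin (2*n)) := S.image E with hS'
    have hc : S'.card = 2*(S.card/2) := by
      rw [hS', Finset.card_image_of_injective _ E.injective]; exact hkk
    set e₀ : ZMod (2*(S.card/2)) ≃ {z : ZMod (2*n) // z ∈ S} :=
      ((zmodFinEquiv (2*(S.card/2))).trans
        ((S'.orderIsoOfFin hc).toEquiv.trans (Equiv.subtypeEquiv E.symm (by
          intro a
          simp only [hS', Finset.mem_image]
          constructor
          · rintro ⟨b, hb, rfl⟩; simpa using hb
          · intro ha; exact ⟨E.symm a, ha, by simp⟩)))) with he₀def
    have hres : B.restrict S = transport hki B S hinv e₀ := by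
      rw [restrict, dif_pos hcond]
    -- explicit description of e₀
    have hAB : x.val ≠ (B.σ x).val := fun h => hxy (ZMod.val_injective _ h)
    set a : ℕ := min x.val (B.σ x).val with hadef
    set b : ℕ := max x.val (B.σ x).val with hbdef
    have hset : (a = x.val ∧ b = (B.σ x).val ∧ x.val ≤ (B.σ x).val) ∨
        (a = (B.σ x).val ∧ b = x.val ∧ (B.σ x).val ≤ x.val) := by
      rcases le_total x.val (B.σ x).val with h | h
      · left; rw [hadef, hbdef, min_eq_left h, max_eq_right h]; exact ⟨rfl, rfl, h⟩
      · right; rw [hadef, hbdef, min_eq_right h, max_eq_left h]; exact ⟨rfl, rfl, h⟩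
    have hvx : x.val < 2*n := ZMod.val_lt x
    have hvy : (B.σ x).val < 2*n := ZMod.val_lt (B.σ x)
    have hab : a < b := by omega
    have hbN : b < 2*n := by omega
    have hxcast : ((x.val : ℕ) : ZMod (2*n)) = x := ZMod.natCast_rightInverse x
    have hycast : (((B.σ x).val : ℕ) : ZMod (2*n)) = B.σ x := ZMod.natCast_rightInverse (B.σ x)
    have hcastS : ∀ t : ℕ, ((t : ZMod (2*n)) ∈ S) ↔ (t % (2*n) ≠ a ∧ t % (2*n) ≠ b) := by
      intro t
      rw [hmemS]
      have h1 : ((t : ZMod (2*n)) = x) ↔ t % (2*n) = x.val := by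
        conv_lhs => rw [← hxcast]
        rw [ZMod.natCast_eq_natCast_iff', Nat.mod_eq_of_lt hvx]
      have h2 : ((t : ZMod (2*n)) = B.σ x) ↔ t % (2*n) = (B.σ x).val := by
        conv_lhs => rw [← hycast]
        rw [ZMod.natCast_eq_natCast_iff', Nat.mod_eq_of_lt hvy]
      rw [Ne, Ne, h1, h2]
      omega
    have hM2 : 2*(S.card/2) = 2*n - 2 := by omega
    have hdlt : ∀ k : ℕ, k < 2*(S.card/2) → dfun a b k < 2*n := by
      intro k hk; unfold dfun; split_ifs <;> omega
    set fexp : Fin (2*(S.card/2)) → Fin (2*n) := fun k => ⟨dfun a b k.1, hdlt k.1 k.isLt⟩ with hfexp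
    have hmem : ∀ k, fexp k ∈ S' := by
      intro k
      rw [hS', Finset.mem_image]
      refine ⟨((dfun a b k.1 : ℕ) : ZMod (2*n)), ?_, ?_⟩
      · rw [hcastS, Nat.mod_eq_of_lt (hdlt _ k.isLt)]
        unfold dfun; split_ifs <;> omega
      · show (⟨(((dfun a b k.1 : ℕ) : ZMod (2*n))).val, _⟩ : Fin (2*n)) = fexp k
        apply Fin.ext
        show (((dfun a b k.1 : ℕ) : ZMod (2*n))).val = dfun a b k.1
        exact ZMod.val_cast_of_lt (hdlt _ k.isLt)
    have hmono : StrictMono fexp := by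
      intro k l hkl
      have hkl' : k.1 < l.1 := hkl
      show (⟨dfun a b k.1, _⟩ : Fin (2*n)) < ⟨dfun a b l.1, _⟩
      rw [Fin.mk_lt_mk]
      unfold dfun; split_ifs <;> omega
    have huniq : ∀ k, fexp k = S'.orderEmbOfFin hc k :=
      fun k => congrFun (Finset.orderEmbOfFin_unique hc hmem hmono) k
    have he₀val : ∀ z : ZMod (2*(S.card/2)), (e₀ z).1 = ((dfun a b z.val : ℕ) : ZMod (2*n)) := by
      intro z
      rw [he₀def]
      simp only [Equiv.trans_apply, Equiv.subtypeEquiv_apply]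
      have h2 : ((S'.orderIsoOfFin hc) ((zmodFinEquiv (2*(S.card/2))) z) : Fin (2*n))
          = fexp ((zmodFinEquiv (2*(S.card/2))) z) := by
        rw [Finset.coe_orderIsoOfFin_apply, ← huniq]
      show E.symm (((S'.orderIsoOfFin hc) ((zmodFinEquiv (2*(S.card/2))) z) : Fin (2*n)))
          = ((dfun a b z.val : ℕ) : ZMod (2*n))
      rw [h2]
      rfl
    have hord : ∀ z : ZMod (2*(S.card/2)),
        ((e₀ (z+1)).1 = (e₀ z).1 + 1 ∧ ((e₀ z).1 + 1) ∈ S) ∨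
        ((e₀ (z+1)).1 = (e₀ z).1 + 2 ∧ ((e₀ z).1 + 1) ∉ S ∧ ((e₀ z).1 + 2) ∈ S) ∨
        ((e₀ (z+1)).1 = (e₀ z).1 + 3 ∧ ((e₀ z).1 + 1) ∉ S ∧ ((e₀ z).1 + 2) ∉ S ∧
          ((e₀ z).1 + 3) ∈ S) := by
      intro z
      have hk : z.val < 2*(S.card/2) := ZMod.val_lt z
      have hz1 : (z+1).val = (z.val + 1) % (2*(S.card/2)) := by
        haveI : Fact (1 < 2*(S.card/2)) := ⟨by omega⟩
        rw [ZMod.val_add, ZMod.val_one]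
      rw [he₀val z, he₀val (z+1), hz1]
      rw [show (1 : ZMod (2*n)) = ((1:ℕ) : ZMod (2*n)) by norm_cast,
          show (2 : ZMod (2*n)) = ((2:ℕ) : ZMod (2*n)) by norm_cast,
          show (3 : ZMod (2*n)) = ((3:ℕ) : ZMod (2*n)) by norm_cast]
      have hplus : ∀ (t c : ℕ), ((t : ZMod (2*n)) + ((c : ℕ) : ZMod (2*n)))
          = ((t + c : ℕ) : ZMod (2*n)) := by
        intro t c; push_cast; ring
      simp only [hplus]
      simp only [ZMod.natCast_eq_natCast_iff', hcastS]
      exact natord (by omega) (by omega) hab hbN hk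
    -- the deleted-chord "identity" involution and its boundary walk
    set σ2 : ZMod (2*n) → ZMod (2*n) := fun i => if i = x ∨ i = B.σ x then i else B.σ i with hσ2
    set f2 : ZMod (2*n) → ZMod (2*n) := fun i => σ2 (i+1) with hf2
    have hσ2invol : ∀ i, σ2 (σ2 i) = i := by
      intro i
      by_cases h : i = x ∨ i = B.σ x
      · simp only [hσ2, if_pos h, if_pos h]
      · have h2 : ¬ (B.σ i = x ∨ B.σ i = B.σ x) := by
          push_neg at h ⊢
          constructor
          · intro heq
            apply h.2
            have := congrArg B.σ heq
            rw [B.invol] at this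
            rw [this]
          · intro heq
            exact h.1 (hσinj heq)
        simp only [hσ2, if_neg h, if_neg h2, B.invol]
    have hσ2inj : Function.Injective σ2 := Function.LeftInverse.injective hσ2invol
    have hf2inj : Function.Injective f2 := by
      intro u v h
      have h2 : u + 1 = v + 1 := hσ2inj h
      exact add_right_cancel h2
    have hnotD : ∀ w : ZMod (2*n), w ∈ S → ¬ (w = x ∨ w = B.σ x) := by
      intro w hw
      rw [hmemS] at hw
      push_neg
      exact hw
    have hD : ∀ w : ZMod (2*n), ¬ w ∈ S → (w = x ∨ w = B.σ x) := by
      intro w hw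
      rw [hmemS] at hw
      by_contra hc
      push_neg at hc
      exact hw hc
    set G : {z : ZMod (2*n) // z ∈ S} → {z : ZMod (2*n) // z ∈ S} :=
      fun u => ⟨B.σ (e₀ (e₀.symm u + 1)).1, hinv _ (e₀ (e₀.symm u + 1)).2⟩ with hG
    -- G is the first-return map of f2 to S
    have hr : ∀ u : {z : ZMod (2*n) // z ∈ S}, ∃ k, 1 ≤ k ∧ f2^[k] u.1 = (G u).1 ∧
        ∀ j, 1 ≤ j → j < k → ¬ (f2^[j] u.1 ∈ S) := by
      intro u
      have hu : e₀ (e₀.symm u) = u := Equiv.apply_symm_apply e₀ u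
      have hGu : (G u).1 = B.σ ((e₀ (e₀.symm u + 1)).1) := rfl
      rcases hord (e₀.symm u) with ⟨heq, hm1⟩ | ⟨heq, hm1, hm2⟩ | ⟨heq, hm1, hm2, hm3⟩ <;>
        rw [hu] at heq hm1
      · refine ⟨1, le_refl 1, ?_, fun j h1 h2 => by omega⟩
        show f2 u.1 = (G u).1
        rw [hGu, heq]
        show σ2 (u.1 + 1) = B.σ (u.1 + 1)
        simp only [hσ2]
        rw [if_neg (hnotD _ hm1)]
      · rw [hu] at hm2
        have hstep1 : f2 u.1 = u.1 + 1 := by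
          show σ2 (u.1 + 1) = u.1 + 1
          simp only [hσ2]
          rw [if_pos (hD _ hm1)]
        have hstep2 : f2 (u.1 + 1) = B.σ (u.1 + 2) := by
          show σ2 (u.1 + 1 + 1) = B.σ (u.1 + 2)
          have h11 : u.1 + 1 + 1 = u.1 + 2 := by ring
          rw [h11]
          simp only [hσ2]
          rw [if_neg (hnotD _ hm2)]
        refine ⟨2, by omega, ?_, ?_⟩
        · show f2 (f2 u.1) = (G u).1
          rw [hstep1, hstep2, hGu, heq]
        · intro j hj1 hj2
          have : j = 1 := by omega
          subst this
          show ¬ f2 u.1 ∈ S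
          rw [hstep1]
          exact hm1
      · rw [hu] at hm2 hm3
        have hstep1 : f2 u.1 = u.1 + 1 := by
          show σ2 (u.1 + 1) = u.1 + 1
          simp only [hσ2]
          rw [if_pos (hD _ hm1)]
        have hstep2 : f2 (u.1 + 1) = u.1 + 2 := by
          show σ2 (u.1 + 1 + 1) = u.1 + 2
          have h11 : u.1 + 1 + 1 = u.1 + 2 := by ring
          rw [h11]
          simp only [hσ2]
          rw [if_pos (hD _ hm2)]
        have hstep3 : f2 (u.1 + 2) = B.σ (u.1 + 3) := by
          show σ2 (u.1 + 2 + 1) = B.σ (u.1 + 3)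
          have h11 : u.1 + 2 + 1 = u.1 + 3 := by ring
          rw [h11]
          simp only [hσ2]
          rw [if_neg (hnotD _ hm3)]
        refine ⟨3, by omega, ?_, ?_⟩
        · show f2 (f2 (f2 u.1)) = (G u).1
          rw [hstep1, hstep2, hstep3, hGu, heq]
        · intro j hj1 hj2
          rcases (by omega : j = 1 ∨ j = 2) with rfl | rfl
          · show ¬ f2 u.1 ∈ S
            rw [hstep1]
            exact hm1
          · show ¬ f2 (f2 u.1) ∈ S
            rw [hstep1, hstep2]
            exact hm2
    -- every point reaches S
    have h1ne : (1 : ZMod (2*n)) ≠ 0 := by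
      haveI : Fact (1 < 2*n) := ⟨by omega⟩
      intro h
      have := congrArg ZMod.val h
      rw [ZMod.val_one, ZMod.val_zero] at this
      exact one_ne_zero this
    have h2ne : (2 : ZMod (2*n)) ≠ 0 := by
      intro h
      have h' : ((2:ℕ) : ZMod (2*n)) = 0 := by
        rw [show ((2:ℕ) : ZMod (2*n)) = (2 : ZMod (2*n)) by norm_cast, h]
      rw [ZMod.natCast_eq_zero_iff] at h'
      have := Nat.le_of_dvd (by omega) h'
      omega
    have hmeet : ∀ z : ZMod (2*n), ∃ k, f2^[k] z ∈ S := by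
      intro z
      by_cases hz : z ∈ S
      · exact ⟨0, hz⟩
      · by_cases hz1 : z + 1 ∈ S
        · refine ⟨1, ?_⟩
          show f2 z ∈ S
          have hfz : f2 z = B.σ (z+1) := by
            show σ2 (z+1) = B.σ (z+1)
            simp only [hσ2]
            rw [if_neg (hnotD _ hz1)]
          rw [hfz]
          exact hinv _ hz1
        · refine ⟨2, ?_⟩
          have hz2 : z + 2 ∈ S := by
            rw [hmemS]
            have hd1 := hD _ hz
            have hd2 := hD _ hz1
            have e2 : z + 2 ≠ z := fun h => h2ne (by linear_combination h)
            have e1 : z + 2 ≠ z + 1 := fun h => h1ne (by linear_combination h)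
            have e0 : z + 1 ≠ z := fun h => h1ne (by linear_combination h)
            constructor
            · intro hcon
              rcases hd1 with h | h
              · exact e2 (hcon.trans h.symm)
              · rcases hd2 with h' | h'
                · exact e1 (hcon.trans h'.symm)
                · exact e0 (h'.trans h.symm)
            · intro hcon
              rcases hd2 with h' | h'
              · rcases hd1 with h | h
                · exact e0 (h'.trans h.symm)
                · exact e2 (hcon.trans h.symm)
              · exact e1 (hcon.trans h'.symm)
          show f2 (f2 z) ∈ S
          have hstep1 : f2 z = z + 1 := by
            show σ2 (z+1) = z + 1
            simp only [hσ2]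
            rw [if_pos (hD _ hz1)]
          have hstep2 : f2 (z + 1) = B.σ (z + 2) := by
            show σ2 (z + 1 + 1) = B.σ (z + 2)
            have h11 : z + 1 + 1 = z + 2 := by ring
            rw [h11]
            simp only [hσ2]
            rw [if_neg (hnotD _ hz2)]
          rw [hstep1, hstep2]
          exact hinv _ hz2
    have hGf2 : orbitCount G = orbitCount f2 := orbitCount_return hf2inj G hr hmeet
    -- conjugation: orbitCount of the restricted walk equals orbitCount G
    have hBt' : ∀ i, (transport hki B S hinv e₀).t i = false := fun i => hor _
    have hconjG : orbitCount G =
        orbitCount (fun i => (transport hki B S hinv e₀).σ (i+1)) := by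
      rw [← orbitCount_conj e₀ (fun i => (transport hki B S hinv e₀).σ (i+1))]
      apply orbitCount_funext
      intro u
      symm
      show e₀ ((transport hki B S hinv e₀).σ (e₀.symm u + 1)) = G u
      show e₀ (e₀.symm ⟨B.σ (e₀ (e₀.symm u + 1)).1, hinv _ (e₀ (e₀.symm u + 1)).2⟩) = G u
      rw [Equiv.apply_symm_apply]
    -- f2 is (the basic walk) ∘ swap
    have hx1y1 : x - 1 ≠ B.σ x - 1 := by
      intro h
      apply hxy
      have := congrArg (fun w => w + 1) h
      simpa using this
    have hginj : Function.Injective (fun i : ZMod (2*n) => B.σ (i+1)) := by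
      intro u v h
      have := hσinj h
      exact add_right_cancel this
    have hfswap : ∀ i, f2 i = (fun j => B.σ (j+1)) (Equiv.swap (x-1) (B.σ x - 1) i) := by
      intro i
      by_cases h1 : i = x - 1
      · subst h1
        rw [Equiv.swap_apply_left]
        show σ2 (x - 1 + 1) = B.σ (B.σ x - 1 + 1)
        rw [sub_add_cancel, sub_add_cancel, B.invol]
        simp only [hσ2]
        split_ifs with h
        · rfl
        · exact absurd (Or.inl trivial) h
      · by_cases h2 : i = B.σ x - 1
        · subst h2
          rw [Equiv.swap_apply_right]
          show σ2 (B.σ x - 1 + 1) = B.σ (x - 1 + 1)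
          rw [sub_add_cancel, sub_add_cancel]
          simp only [hσ2]
          split_ifs with h
          · rfl
          · exact absurd (Or.inr trivial) h
        · rw [Equiv.swap_apply_of_ne_of_ne h1 h2]
          show σ2 (i + 1) = B.σ (i + 1)
          simp only [hσ2]
          split_ifs with h
          · exfalso
            rcases h with hcon | hcon
            · exact h1 (by rw [← hcon]; ring)
            · exact h2 (by rw [← hcon]; ring)
          · rfl
    have hswap : orbitCount f2 = orbitCount (fun i : ZMod (2*n) => B.σ (i+1)) + 1 ∨
        orbitCount f2 + 1 = orbitCount (fun i : ZMod (2*n) => B.σ (i+1)) := by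
      have h := orbitCount_comp_swap (p := fun i : ZMod (2*n) => B.σ (i+1)) hginj hx1y1
      have heq : orbitCount f2 =
          orbitCount (fun i => (fun j : ZMod (2*n) => B.σ (j+1)) (Equiv.swap (x-1) (B.σ x - 1) i)) :=
        orbitCount_funext hfswap
      rw [heq]
      exact h
    -- put everything together
    rw [hres, numBoundary_eq_orbitCount hki _ hBt', numBoundary_eq_orbitCount hn B hor]
    rw [← hconjG, hGf2]
    exact hswap

end Bouquet
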